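/- Let H be a symmetric positive-definite d×d matrix, θ, θ̂ : ℝ≥0 → ℝᵈ differentiable, S : ℝᵈ → ℝᵈ a C¹ vector field whose Jacobian satisfies H·DS(z) + DS(z)ᵀH ≤ 0 for all z, and suppose θ' = S(θ), θ̂' = S(θ̂) + H⁻¹ (κ(t)²+1) A(t)ᵀ (A(t)(θ−θ̂) + ε(t)), where A : ℝ≥0 → ℝ^{n×d} and ε, κ·ε : ℝ≥0 → ℝⁿ are continuous with ε ∈ L² and t ↦ κ(t)ε(t) ∈ L². Then the function V(t) = (θ(t)−θ̂(t))ᵀ H (θ(t)−θ̂(t)) + (1/2)∫_t^∞ (κ(τ)²+1)‖ε(τ)‖² dτ is nonincreasing, and consequently θ(t)−θ̂(t) is bounded on ℝ≥0. -/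

import Mathlib

open MeasureTheory Set Matrix

def esq {n : ℕ} (v : Fin n → ℝ) : ℝ := ∑ i, (v i) ^ 2

noncomputable def jac {d : ℕ} (S : (Fin d → ℝ) → (Fin d → ℝ)) (z : Fin d → ℝ) :
    Matrix (Fin d) (Fin d) ℝ :=
  Matrix.of fun i j => fderiv ℝ S z (Pi.single j 1) i

/-! The error `e = θ - θhat` satisfies `e' = S θ - S θhat - H⁻¹ (κ² + 1) Aᵀ (A e + ε)`.
Integrating the Jacobian condition along the segment from `θhat` to `θ` shows that `S` is
monotone for the `H`-inner product, `(θ - θhat)ᵀ H (S θ - S θhat) ≤ 0`. Hence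
`(eᵀ H e)' ≤ -2 (κ² + 1) (A e)ᵀ (A e + ε) ≤ (κ² + 1) ‖ε‖² / 2`, the last step by completing the
square `‖2 A e + ε‖² ≥ 0`, so adding half the tail integral of `(κ² + 1) ‖ε‖²` gives a
nonincreasing function. Positive definiteness of `H` turns the resulting bound on `eᵀ H e`
into a bound on `‖e‖`. -/

lemma esq_eq_dotProduct {n : ℕ} (v : Fin n → ℝ) : esq v = v ⬝ᵥ v := by
  simp only [esq, dotProduct, sq]

lemma esq_nonneg {n : ℕ} (v : Fin n → ℝ) : 0 ≤ esq v :=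
  Finset.sum_nonneg fun _ _ => sq_nonneg _

lemma continuous_esq {n : ℕ} : Continuous (esq (n := n)) := by
  simp only [funext esq_eq_dotProduct]
  exact continuous_id.dotProduct continuous_id

lemma esq_smul {n : ℕ} (c : ℝ) (v : Fin n → ℝ) : esq (c • v) = c ^ 2 * esq v := by
  simp only [esq, Pi.smul_apply, smul_eq_mul, mul_pow, Finset.mul_sum]

lemma esq_two_smul_add {n : ℕ} (u v : Fin n → ℝ) :
    esq ((2 : ℝ) • u + v) = 4 * (u ⬝ᵥ (u + v)) + esq v := by
  simp only [esq, dotProduct, Pi.add_apply, Pi.smul_apply, smul_eq_mul, Finset.mul_sum,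
    ← Finset.sum_add_distrib]
  exact Finset.sum_congr rfl fun _ _ => by ring

lemma four_mul_dotProduct_add_esq_nonneg {n : ℕ} (u v : Fin n → ℝ) :
    0 ≤ 4 * (u ⬝ᵥ (u + v)) + esq v :=
  esq_two_smul_add u v ▸ esq_nonneg _

theorem exists_pos_mul_norm_sq_le {E : Type*} [NormedAddCommGroup E] [NormedSpace ℝ E]
    [FiniteDimensional ℝ E] {q : E → ℝ} (hq : Continuous q)
    (hsmul : ∀ (c : ℝ) x, q (c • x) = c ^ 2 * q x) (hpos : ∀ x ≠ 0, 0 < q x) :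
    ∃ c > 0, ∀ x, c * ‖x‖ ^ 2 ≤ q x := by
  have hsphere : ∀ x ≠ (0 : E), ‖x‖⁻¹ • x ∈ Metric.sphere (0 : E) 1 ∧
      q x = ‖x‖ ^ 2 * q (‖x‖⁻¹ • x) := by
    intro x hx
    have hx' : ‖x‖ ≠ 0 := norm_ne_zero_iff.mpr hx
    refine ⟨by simp [norm_smul, hx'], ?_⟩
    rw [hsmul, ← mul_assoc, ← mul_pow, mul_inv_cancel₀ hx', one_pow, one_mul]
  rcases (Metric.sphere (0 : E) 1).eq_empty_or_nonempty with hempty | hne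
  · refine ⟨1, one_pos, fun x => ?_⟩
    obtain rfl : x = 0 := by
      by_contra hx
      simpa [hempty] using (hsphere x hx).1
    simpa using (hsmul 0 0).symm.le
  obtain ⟨x₀, hx₀, hmin⟩ := (isCompact_sphere (0 : E) 1).exists_isMinOn hne hq.continuousOn
  have hx₀ne : x₀ ≠ 0 := ne_zero_of_mem_unit_sphere ⟨x₀, hx₀⟩
  refine ⟨q x₀, hpos x₀ hx₀ne, fun x => ?_⟩
  rcases eq_or_ne x 0 with rfl | hx
  · simpa using (hsmul 0 0).symm.le
  obtain ⟨hmem, hqx⟩ := hsphere x hx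
  rw [hqx, mul_comm]
  exact mul_le_mul_of_nonneg_left (hmin hmem) (sq_nonneg _)

theorem Matrix.PosDef.exists_pos_mul_esq_le {d : ℕ} {H : Matrix (Fin d) (Fin d) ℝ}
    (hH : H.PosDef) : ∃ c > 0, ∀ x, c * esq x ≤ x ⬝ᵥ H *ᵥ x := by
  obtain ⟨c, hc, hle⟩ := exists_pos_mul_norm_sq_le (E := EuclideanSpace ℝ (Fin d))
    (q := fun x => x.ofLp ⬝ᵥ H *ᵥ x.ofLp)
    ((PiLp.continuous_ofLp 2 _).dotProduct
      (continuous_const.matrix_mulVec (PiLp.continuous_ofLp 2 _)))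
    (fun c x => by
      simp only [WithLp.ofLp_smul, mulVec_smul, dotProduct_smul, smul_dotProduct, smul_eq_mul]
      ring)
    (fun x hx => by simpa using hH.dotProduct_mulVec_pos (x := x.ofLp) (by simpa using hx))
  refine ⟨c, hc, fun x => ?_⟩
  simpa [EuclideanSpace.real_norm_sq_eq, esq] using hle (WithLp.toLp 2 x)

lemma jac_mulVec {d : ℕ} (S : (Fin d → ℝ) → (Fin d → ℝ)) (z e : Fin d → ℝ) :
    jac S z *ᵥ e = fderiv ℝ S z e := by
  have : jac S z = LinearMap.toMatrix' (fderiv ℝ S z : (Fin d → ℝ) →ₗ[ℝ] Fin d → ℝ) := by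
    ext i j; simp [jac, LinearMap.toMatrix'_apply]
  rw [this, LinearMap.toMatrix'_mulVec]; rfl

theorem Matrix.dotProduct_mulVec_mulVec_nonpos {ι : Type*} [Fintype ι]
    {H J : Matrix ι ι ℝ} (hH : H.IsSymm) (hJ : (-(H * J + Jᵀ * H)).PosSemidef) (e : ι → ℝ) :
    e ⬝ᵥ H *ᵥ (J *ᵥ e) ≤ 0 := by
  have hsymm : e ⬝ᵥ (Jᵀ * H) *ᵥ e = e ⬝ᵥ H *ᵥ (J *ᵥ e) := by
    have hHe : H *ᵥ e = e ᵥ* H := by rw [← mulVec_transpose, hH.eq]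
    rw [← mulVec_mulVec, dotProduct_mulVec, vecMul_transpose, hHe, dotProduct_comm,
      ← dotProduct_mulVec]
  have := hJ.dotProduct_mulVec_nonneg e
  rw [star_trivial, neg_mulVec, dotProduct_neg, add_mulVec, dotProduct_add, hsymm,
    ← mulVec_mulVec] at this
  linarith

theorem ContinuousLinearMap.apply_le_of_apply_fderiv_nonpos {E F : Type*}
    [NormedAddCommGroup E] [NormedSpace ℝ E] [NormedAddCommGroup F] [NormedSpace ℝ F]
    (L : F →L[ℝ] ℝ) {S : E → F} (hS : Differentiable ℝ S) {a b : E}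
    (h : ∀ z, L (fderiv ℝ S z (a - b)) ≤ 0) : L (S a) ≤ L (S b) := by
  have hderiv : ∀ s : ℝ, HasDerivAt (fun s : ℝ => L (S (b + s • (a - b))))
      (L (fderiv ℝ S (b + s • (a - b)) (a - b))) s := fun s =>
    L.hasFDerivAt.comp_hasDerivAt s <| (hS _).hasFDerivAt.comp_hasDerivAt s <| by
      simpa using ((hasDerivAt_id s).smul_const (a - b)).const_add b
  have hanti : Antitone fun s : ℝ => L (S (b + s • (a - b))) :=
    antitone_of_deriv_nonpos (fun s => (hderiv s).differentiableAt)
      fun s => (hderiv s).deriv ▸ h _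
  simpa using hanti zero_le_one

theorem dotProduct_mulVec_sub_nonpos_of_jac {d : ℕ} {H : Matrix (Fin d) (Fin d) ℝ}
    (hH : H.IsSymm) {S : (Fin d → ℝ) → (Fin d → ℝ)} (hS : Differentiable ℝ S)
    (hneg : ∀ z, (-(H * jac S z + (jac S z)ᵀ * H)).PosSemidef) (a b : Fin d → ℝ) :
    (a - b) ⬝ᵥ H *ᵥ (S a - S b) ≤ 0 := by
  let L : (Fin d → ℝ) →L[ℝ] ℝ :=
    LinearMap.toContinuousLinearMap (toLinearMap₂' ℝ H (a - b))
  have hL : ∀ w, L w = (a - b) ⬝ᵥ H *ᵥ w := toLinearMap₂'_apply' H (a - b)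
  have := L.apply_le_of_apply_fderiv_nonpos hS (a := a) (b := b) fun z => by
    rw [hL, ← jac_mulVec]
    exact dotProduct_mulVec_mulVec_nonpos hH (hneg z) (a - b)
  rw [hL, hL] at this
  rw [mulVec_sub, dotProduct_sub]
  linarith

theorem HasDerivAt.dotProduct {ι : Type*} [Fintype ι] {f g : ℝ → ι → ℝ} {f' g' : ι → ℝ}
    {t : ℝ} (hf : HasDerivAt f f' t) (hg : HasDerivAt g g' t) :
    HasDerivAt (fun t => f t ⬝ᵥ g t) (f' ⬝ᵥ g t + f t ⬝ᵥ g') t := by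
  simp only [_root_.dotProduct, ← Finset.sum_add_distrib]
  exact HasDerivAt.fun_sum fun i _ => (hasDerivAt_pi.mp hf i).fun_mul (hasDerivAt_pi.mp hg i)

theorem HasDerivAt.mulVec {ι κ : Type*} [Fintype ι] (M : Matrix κ ι ℝ) {f : ℝ → ι → ℝ}
    {f' : ι → ℝ} {t : ℝ} (hf : HasDerivAt f f' t) :
    HasDerivAt (fun t => M *ᵥ f t) (M *ᵥ f') t :=
  hasDerivAt_pi.mpr fun i => by
    have := (hasDerivAt_const t (M i)).dotProduct hf
    rw [zero_dotProduct, zero_add] at this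
    exact this

theorem HasDerivAt.dotProduct_mulVec_self {ι : Type*} [Fintype ι] {H : Matrix ι ι ℝ}
    (hH : H.IsSymm) {f : ℝ → ι → ℝ} {f' : ι → ℝ} {t : ℝ} (hf : HasDerivAt f f' t) :
    HasDerivAt (fun t => f t ⬝ᵥ H *ᵥ f t) (2 * (f t ⬝ᵥ H *ᵥ f')) t := by
  convert hf.dotProduct (hf.mulVec H) using 1
  rw [two_mul, dotProduct_comm f', dotProduct_mulVec, ← mulVec_transpose, hH.eq]

theorem antitoneOn_add_integral_Ici {q q' g : ℝ → ℝ} (hq : ∀ t, HasDerivAt q (q' t) t)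
    (hle : ∀ t, q' t ≤ g t) (hg : Continuous g) {t₀ : ℝ} (hgi : IntegrableOn g (Ici t₀)) :
    AntitoneOn (fun t => q t + ∫ τ in Ici t, g τ) (Ici t₀) := by
  intro a ha b hb hab
  have hd : ∀ t, HasDerivAt (fun t => q t - ∫ τ in a..t, g τ) (q' t - g t) t := fun t =>
    (hq t).sub (hg.integral_hasStrictDerivAt a t).hasDerivAt
  have hanti : Antitone fun t => q t - ∫ τ in a..t, g τ :=
    antitone_of_deriv_nonpos (fun t => (hd t).differentiableAt)
      fun t => (hd t).deriv ▸ sub_nonpos.mpr (hle t)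
  have hsplit := intervalIntegral.integral_Ici_sub_Ici' (hgi.mono_set (Ici_subset_Ici.2 ha))
    (hgi.mono_set (Ici_subset_Ici.2 hb))
  have hab' := hanti hab
  simp only [intervalIntegral.integral_same, sub_zero] at hab'
  linarith

theorem dotProduct_mulVec_sub_inv_mulVec_le {d n : ℕ} {H : Matrix (Fin d) (Fin d) ℝ}
    (hH : IsUnit H.det) (A : Matrix (Fin n) (Fin d) ℝ) (ε : Fin n → ℝ) {c : ℝ} (hc : 0 ≤ c)
    {e w : Fin d → ℝ} (hw : e ⬝ᵥ H *ᵥ w ≤ 0) :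
    e ⬝ᵥ H *ᵥ (w - H⁻¹ *ᵥ (c • Aᵀ *ᵥ (A *ᵥ e + ε))) ≤ c / 4 * esq ε := by
  rw [mulVec_sub, mulVec_mulVec, mul_nonsing_inv H hH, one_mulVec, dotProduct_sub,
    dotProduct_smul, smul_eq_mul, dotProduct_mulVec e Aᵀ, vecMul_transpose]
  nlinarith [mul_nonneg hc (four_mul_dotProduct_add_esq_nonneg (A *ᵥ e) ε)]

theorem virtual_adaptation_bounded_general {n d : ℕ}
    (H : Matrix (Fin d) (Fin d) ℝ) (hHsymm : H.IsSymm) (hHpos : H.PosDef)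
    (S : (Fin d → ℝ) → (Fin d → ℝ)) (hS : ContDiff ℝ 1 S)
    (hneg : ∀ z : Fin d → ℝ, (-(H * jac S z + (jac S z)ᵀ * H)).PosSemidef)
    (A : ℝ → Matrix (Fin n) (Fin d) ℝ)
    (κ : ℝ → ℝ) (hκ : Continuous κ)
    (ε : ℝ → Fin n → ℝ) (hε : Continuous ε)
    (hεL2 : IntegrableOn (fun t => esq (ε t)) (Ici (0 : ℝ)))
    (hκεL2 : IntegrableOn (fun t => esq (κ t • ε t)) (Ici (0 : ℝ)))
    (θ θhat : ℝ → Fin d → ℝ)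
    (hθ : ∀ t, HasDerivAt θ (S (θ t)) t)
    (hθhat : ∀ t, HasDerivAt θhat
      (S (θhat t) +
        H⁻¹.mulVec ((κ t ^ 2 + 1) •
          (A t)ᵀ.mulVec ((A t).mulVec (θ t - θhat t) + ε t))) t) :
    (AntitoneOn
      (fun t => (θ t - θhat t) ⬝ᵥ H.mulVec (θ t - θhat t) +
        (1 / 2) * ∫ τ in Ici t, (κ τ ^ 2 + 1) * esq (ε τ)) (Ici (0 : ℝ))) ∧
    ∃ C : ℝ, ∀ t, 0 ≤ t → Real.sqrt (esq (θ t - θhat t)) ≤ C := by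
  set g : ℝ → ℝ := fun t => (κ t ^ 2 + 1) * esq (ε t)
  have hg : Continuous g := ((hκ.pow 2).add continuous_const).mul (continuous_esq.comp hε)
  have hgi : IntegrableOn g (Ici 0) := (hεL2.add hκεL2).congr_fun
    (fun t _ => by simp only [g, esq_smul, Pi.add_apply]; ring) measurableSet_Ici
  have hmono := dotProduct_mulVec_sub_nonpos_of_jac hHsymm (hS.differentiable one_ne_zero) hneg
  have hV := antitoneOn_add_integral_Ici (g := fun t => 1 / 2 * g t)
    (fun t => ((hθ t).sub (hθhat t)).dotProduct_mulVec_self hHsymm)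
    (fun t => by
      rw [Pi.sub_apply, sub_add_eq_sub_sub]
      linarith [dotProduct_mulVec_sub_inv_mulVec_le hHpos.det_pos.ne'.isUnit (A t) (ε t)
        (by positivity : 0 ≤ κ t ^ 2 + 1) (hmono (θ t) (θhat t))])
    (continuous_const.mul hg) (hgi.const_mul (1 / 2))
  simp only [integral_const_mul, Pi.sub_apply] at hV
  refine ⟨hV, ?_⟩
  obtain ⟨c, hc, hcH⟩ := hHpos.exists_pos_mul_esq_le
  refine ⟨√(((θ 0 - θhat 0) ⬝ᵥ H *ᵥ (θ 0 - θhat 0) + 1 / 2 * ∫ τ in Ici 0, g τ) / c),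
    fun t ht => Real.sqrt_le_sqrt ?_⟩
  rw [le_div_iff₀ hc, mul_comm]
  calc c * esq (θ t - θhat t) ≤ (θ t - θhat t) ⬝ᵥ H *ᵥ (θ t - θhat t) := hcH _
    _ ≤ (θ t - θhat t) ⬝ᵥ H *ᵥ (θ t - θhat t) + 1 / 2 * ∫ τ in Ici t, g τ :=
      le_add_of_nonneg_right <| mul_nonneg (by norm_num) <|
        setIntegral_nonneg measurableSet_Ici fun τ _ => mul_nonneg (by positivity) (esq_nonneg _)
    _ ≤ _ := hV self_mem_Ici ht ht

/-- the Lyapunov function of the virtual adaptation algorithm is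
nonincreasing and the parameter error θ − θ̂ is bounded. -/
theorem virtual_adaptation_bounded {n d : ℕ}
    (H : Matrix (Fin d) (Fin d) ℝ) (hHsymm : H.IsSymm) (hHpos : H.PosDef)
    (S : (Fin d → ℝ) → (Fin d → ℝ)) (hS : ContDiff ℝ 1 S)
    (hneg : ∀ z : Fin d → ℝ, (-(H * jac S z + (jac S z)ᵀ * H)).PosSemidef)
    (A : ℝ → Matrix (Fin n) (Fin d) ℝ) (hA : Continuous A)
    (κ : ℝ → ℝ) (hκ : Continuous κ)
    (ε : ℝ → Fin n → ℝ) (hε : Continuous ε)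
    (hεL2 : IntegrableOn (fun t => esq (ε t)) (Ici (0 : ℝ)))
    (hκεL2 : IntegrableOn (fun t => esq (κ t • ε t)) (Ici (0 : ℝ)))
    (θ θhat : ℝ → Fin d → ℝ)
    (hθ : ∀ t, HasDerivAt θ (S (θ t)) t)
    (hθhat : ∀ t, HasDerivAt θhat
      (S (θhat t) +
        H⁻¹.mulVec ((κ t ^ 2 + 1) •
          (A t)ᵀ.mulVec ((A t).mulVec (θ t - θhat t) + ε t))) t) :
    (AntitoneOn
      (fun t => (θ t - θhat t) ⬝ᵥ H.mulVec (θ t - θhat t) +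
        (1 / 2) * ∫ τ in Ici t, (κ τ ^ 2 + 1) * esq (ε τ)) (Ici (0 : ℝ))) ∧
    ∃ C : ℝ, ∀ t, 0 ≤ t → Real.sqrt (esq (θ t - θhat t)) ≤ C :=
  virtual_adaptation_bounded_general H hHsymm hHpos S hS hneg A κ hκ ε hε hεL2 hκεL2 θ θhat hθ hθhat
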